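/- Existence, stochastic case (Theorem 3.1, first part). Under the stated assumptions, there exists a function u ∈ L^∞(X×(0,∞)) with u ≥ 0 such that u(x,t) = g(x,t) + ∫₀ᵗ ∫_X K(x,y;t−s) h(y,s) G(u(y,s)) dμ(y) ds for a.e. x ∈ X and a.e. t > 0. Moreover u is the almost-everywhere pointwise limit of the nonincreasing sequence {u_m} of non-negative measurable functions defined by u₀(x,t) := ξ − β + g(x,t) and u_{m+1}(x,t) := g(x,t) + ∫₀ᵗ ∫_X K(x,y;t−s) h(y,s) G(u_m(y,s)) dμ(y) ds, where β := ‖g‖_{L^∞(X×(0,∞))}. -/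

import Mathlib

/-!
Starting from `U₀ = ξ - β + g`, the Picard iterates of `u ↦ g + V (h · G ∘ u)`, where `V` is the
Volterra operator of the kernel `K`, decrease and stay in `[0, ξ]`. The operator is monotone
because `K, h ≥ 0` and `G` is nondecreasing, and it maps `{0 ≤ u ≤ ξ}` into itself because
`K (x, ·; τ)` is a probability density, `h ≤ p₂` and `∫ p₂ = 1`, so that
`V (h · G ∘ u) ≤ G ξ = ξ - β`, while `g ≤ β`. The decreasing limit solves the equation by
dominated convergence, with dominating function `p₂ (s) G (ξ)`.
-/

open MeasureTheory Set Filter Topology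

section AeTransfer

variable {α β : Type*} [MeasurableSpace α] [MeasurableSpace β] {μ : Measure α} {ν : Measure β}

theorem MeasureTheory.Measure.ae_ae_swap_of_ae_prod [SFinite μ] [SFinite ν] {p : α → β → Prop}
    (h : ∀ᵐ z ∂μ.prod ν, p z.1 z.2) : ∀ᵐ y ∂ν, ∀ᵐ x ∂μ, p x y :=
  Measure.ae_ae_of_ae_prod (Measure.measurePreserving_swap.quasiMeasurePreserving.ae h)

theorem MeasureTheory.Measure.ae_prod_le_of_ae_ae [SFinite ν] {f : α × β → ℝ} {p : β → ℝ}
    (hf : Measurable f) (hp : AEMeasurable p ν) (h : ∀ᵐ x ∂μ, ∀ᵐ y ∂ν, f (x, y) ≤ p y) :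
    ∀ᵐ z ∂μ.prod ν, f z ≤ p z.2 := by
  -- Iterated a.e. statements give product a.e. ones only for measurable sets.
  have hmk : ∀ᵐ z ∂μ.prod ν, f z ≤ hp.mk p z.2 := by
    refine (Measure.ae_prod_iff_ae_ae
      (measurableSet_le hf (hp.measurable_mk.comp measurable_snd))).2 ?_
    filter_upwards [h] with x hx
    filter_upwards [hx, hp.ae_eq_mk] with y hxy hy
    exact hxy.trans_eq hy
  filter_upwards [hmk, Measure.quasiMeasurePreserving_snd.ae hp.ae_eq_mk] with z hz hpz
  exact hpz ▸ hz

theorem MeasureTheory.MemLp.ae_norm_le_toReal_eLpNorm_top {E : Type*} [NormedAddCommGroup E]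
    {f : α → E} (hf : MemLp f ⊤ μ) : ∀ᵐ a ∂μ, ‖f a‖ ≤ (eLpNorm f ⊤ μ).toReal := by
  filter_upwards [enorm_ae_le_eLpNormEssSup f μ] with a ha
  rw [← toReal_enorm, eLpNorm_exponent_top]
  exact ENNReal.toReal_mono (eLpNorm_exponent_top (f := f) ▸ hf.2).ne ha

end AeTransfer

theorem ae_restrict_Ioc_sub {Q : ℝ → Prop} (t : ℝ) (hQ : ∀ᵐ τ ∂(volume.restrict (Ioi 0)), Q τ) :
    ∀ᵐ s ∂(volume.restrict (Ioc 0 t)), Q (t - s) := by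
  rw [← restrict_Ioo_eq_restrict_Ioc, ae_restrict_iff' measurableSet_Ioo]
  filter_upwards [(Measure.measurePreserving_sub_left volume t).quasiMeasurePreserving.ae
    ((ae_restrict_iff' measurableSet_Ioi).mp hQ)] with s hs hst
  exact hs (sub_pos.2 hst.2)

theorem ContinuousOn.measurable_comp_of_nonneg {α : Type*} [MeasurableSpace α] {G : ℝ → ℝ}
    (hG : ContinuousOn G (Ici 0)) {f : α → ℝ} (hf : Measurable f) (h0 : ∀ a, 0 ≤ f a) :
    Measurable fun a => G (f a) := by
  have hcont : Continuous fun r => G (max r 0) :=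
    hG.comp_continuous (by fun_prop) fun r => le_max_right r 0
  convert hcont.measurable.comp hf using 2 with a
  simp only [Function.comp_apply, max_eq_left (h0 a)]

section KernelAverage

variable {X : Type*} [MeasurableSpace X] {μ : Measure X} {k f : X → ℝ} {b : ℝ}

theorem integrable_mul_of_integral_eq_one (hk : ∫ y, k y ∂μ = 1)
    (hf : AEStronglyMeasurable f μ) (hfb : ∀ᵐ y ∂μ, ‖f y‖ ≤ b) :
    Integrable (fun y => k y * f y) μ :=
  (Integrable.of_integral_ne_zero (hk ▸ one_ne_zero)).mul_bdd hf hfb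

theorem norm_integral_mul_le_of_integral_eq_one (hk0 : ∀ y, 0 ≤ k y) (hk : ∫ y, k y ∂μ = 1)
    (hfb : ∀ᵐ y ∂μ, ‖f y‖ ≤ b) : ‖∫ y, k y * f y ∂μ‖ ≤ b := by
  calc ‖∫ y, k y * f y ∂μ‖ ≤ ∫ y, k y * b ∂μ := by
        refine norm_integral_le_of_norm_le
          ((Integrable.of_integral_ne_zero (hk ▸ one_ne_zero)).mul_const b) ?_
        filter_upwards [hfb] with y hy
        rw [norm_mul, Real.norm_of_nonneg (hk0 y)]
        exact mul_le_mul_of_nonneg_left hy (hk0 y)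
    _ = b := by rw [integral_mul_const, hk, one_mul]

end KernelAverage

section Volterra

variable {X : Type*} [MeasurableSpace X] {μ : Measure X} {K : X → X → ℝ → ℝ}

local notation "ν" => volume.restrict (Ioi (0 : ℝ))

noncomputable def volterraOp (μ : Measure X) (K : X → X → ℝ → ℝ) (φ : X → ℝ → ℝ) (x : X) (t : ℝ) :
    ℝ :=
  ∫ s in Ioc 0 t, ∫ y, K x y (t - s) * φ y s ∂μ

variable {φ ψ : X → ℝ → ℝ} {x : X} {t : ℝ} {p : ℝ → ℝ}

theorem volterraOp_nonneg (hK0 : ∀ y τ, 0 ≤ K x y τ)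
    (hφ0 : ∀ y s, 0 ≤ φ y s) : 0 ≤ volterraOp μ K φ x t :=
  integral_nonneg fun _ => integral_nonneg fun y => mul_nonneg (hK0 y _) (hφ0 y _)

theorem ae_integrable_volterraIntegrand
    (hx : ∀ᵐ τ ∂ν, ∫ y, K x y τ ∂μ = 1)
    (hφ : Measurable fun q : X × ℝ => φ q.1 q.2)
    (hφp : ∀ᵐ s ∂ν, ∀ᵐ y ∂μ, ‖φ y s‖ ≤ p s) :
    ∀ᵐ s ∂(volume.restrict (Ioc 0 t)), Integrable (fun y => K x y (t - s) * φ y s) μ := by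
  filter_upwards [ae_restrict_Ioc_sub t hx,
    ae_restrict_of_ae_restrict_of_subset Ioc_subset_Ioi_self hφp] with s hKs hφs
  exact integrable_mul_of_integral_eq_one hKs
    (hφ.comp (f := fun y => (y, s)) (by fun_prop)).aestronglyMeasurable hφs

theorem ae_norm_volterraIntegrand_le (hK0 : ∀ y τ, 0 ≤ K x y τ)
    (hx : ∀ᵐ τ ∂ν, ∫ y, K x y τ ∂μ = 1)
    (hφp : ∀ᵐ s ∂ν, ∀ᵐ y ∂μ, ‖φ y s‖ ≤ p s) :
    ∀ᵐ s ∂(volume.restrict (Ioc 0 t)), ‖∫ y, K x y (t - s) * φ y s ∂μ‖ ≤ p s := by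
  filter_upwards [ae_restrict_Ioc_sub t hx,
    ae_restrict_of_ae_restrict_of_subset Ioc_subset_Ioi_self hφp] with s hKs hφs
  exact norm_integral_mul_le_of_integral_eq_one (hK0 · _) hKs hφs

theorem volterraOp_le (hK0 : ∀ y τ, 0 ≤ K x y τ)
    (hx : ∀ᵐ τ ∂ν, ∫ y, K x y τ ∂μ = 1)
    (hφp : ∀ᵐ s ∂ν, ∀ᵐ y ∂μ, ‖φ y s‖ ≤ p s)
    (hp : IntegrableOn p (Ioi 0)) :
    volterraOp μ K φ x t ≤ ∫ s in Ioc 0 t, p s :=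
  (Real.le_norm_self _).trans <| norm_integral_le_of_norm_le (hp.mono_set Ioc_subset_Ioi_self)
    (ae_norm_volterraIntegrand_le hK0 hx hφp)

variable [SigmaFinite μ]

theorem measurable_volterraIntegrand (hK : Measurable fun q : X × X × ℝ => K q.1 q.2.1 q.2.2)
    (hφ : Measurable fun q : X × ℝ => φ q.1 q.2) :
    Measurable fun z : (X × ℝ) × ℝ => ∫ y, K z.1.1 y (z.1.2 - z.2) * φ y z.2 ∂μ := by
  have hF : Measurable fun z : ((X × ℝ) × ℝ) × X =>
      K z.1.1.1 z.2 (z.1.1.2 - z.1.2) * φ z.2 z.1.2 :=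
    (hK.comp (f := fun z : ((X × ℝ) × ℝ) × X => (z.1.1.1, z.2, z.1.1.2 - z.1.2))
      (by fun_prop)).mul (hφ.comp (f := fun z : ((X × ℝ) × ℝ) × X => (z.2, z.1.2)) (by fun_prop))
  exact hF.stronglyMeasurable.integral_prod_right'.measurable

theorem measurable_volterraOp (hK : Measurable fun q : X × X × ℝ => K q.1 q.2.1 q.2.2)
    (hφ : Measurable fun q : X × ℝ => φ q.1 q.2) :
    Measurable fun q : X × ℝ => volterraOp μ K φ q.1 q.2 := by
  have hE : MeasurableSet {z : (X × ℝ) × ℝ | z.2 ∈ Ioc 0 z.1.2} :=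
    (measurableSet_lt measurable_const measurable_snd).inter
      (measurableSet_le measurable_snd measurable_fst.snd)
  have hind : (fun q : X × ℝ => volterraOp μ K φ q.1 q.2) = fun q => ∫ s,
      {z : (X × ℝ) × ℝ | z.2 ∈ Ioc 0 z.1.2}.indicator
        (fun z => ∫ y, K z.1.1 y (z.1.2 - z.2) * φ y z.2 ∂μ) (q, s) := by
    funext q
    rw [volterraOp, ← integral_indicator measurableSet_Ioc]
    rfl
  rw [hind]
  exact ((measurable_volterraIntegrand hK hφ).indicator hE).stronglyMeasurable
    |>.integral_prod_right' |>.measurable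

theorem integrableOn_volterraIntegrand (hK : Measurable fun q : X × X × ℝ => K q.1 q.2.1 q.2.2)
    (hK0 : ∀ y τ, 0 ≤ K x y τ) (hx : ∀ᵐ τ ∂ν, ∫ y, K x y τ ∂μ = 1)
    (hφ : Measurable fun q : X × ℝ => φ q.1 q.2)
    (hφp : ∀ᵐ s ∂ν, ∀ᵐ y ∂μ, ‖φ y s‖ ≤ p s)
    (hp : IntegrableOn p (Ioi 0)) :
    IntegrableOn (fun s => ∫ y, K x y (t - s) * φ y s ∂μ) (Ioc 0 t) :=
  (hp.mono_set Ioc_subset_Ioi_self).mono'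
    ((measurable_volterraIntegrand (μ := μ) hK hφ).comp (f := fun s => ((x, t), s))
      (by fun_prop)).aestronglyMeasurable
    (ae_norm_volterraIntegrand_le hK0 hx hφp)

theorem volterraOp_mono (hK : Measurable fun q : X × X × ℝ => K q.1 q.2.1 q.2.2)
    (hK0 : ∀ y τ, 0 ≤ K x y τ) (hx : ∀ᵐ τ ∂ν, ∫ y, K x y τ ∂μ = 1)
    (hφ : Measurable fun q : X × ℝ => φ q.1 q.2) (hψ : Measurable fun q : X × ℝ => ψ q.1 q.2)
    (hφp : ∀ᵐ s ∂ν, ∀ᵐ y ∂μ, ‖φ y s‖ ≤ p s)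
    (hψp : ∀ᵐ s ∂ν, ∀ᵐ y ∂μ, ‖ψ y s‖ ≤ p s)
    (hp : IntegrableOn p (Ioi 0))
    (hψφ : ∀ᵐ s ∂ν, ∀ᵐ y ∂μ, ψ y s ≤ φ y s) :
    volterraOp μ K ψ x t ≤ volterraOp μ K φ x t := by
  refine integral_mono_ae (integrableOn_volterraIntegrand hK hK0 hx hψ hψp hp)
    (integrableOn_volterraIntegrand hK hK0 hx hφ hφp hp) ?_
  filter_upwards [ae_integrable_volterraIntegrand hx hψ hψp,
    ae_integrable_volterraIntegrand hx hφ hφp,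
    ae_restrict_of_ae_restrict_of_subset Ioc_subset_Ioi_self hψφ] with s hψs hφs hs
  exact integral_mono_ae hψs hφs <| hs.mono fun y hy => mul_le_mul_of_nonneg_left hy (hK0 y _)

theorem tendsto_volterraOp {Φ : ℕ → X → ℝ → ℝ}
    (hK : Measurable fun q : X × X × ℝ => K q.1 q.2.1 q.2.2)
    (hK0 : ∀ y τ, 0 ≤ K x y τ) (hx : ∀ᵐ τ ∂ν, ∫ y, K x y τ ∂μ = 1)
    (hΦ : ∀ n, Measurable fun q : X × ℝ => Φ n q.1 q.2)
    (hΦp : ∀ n, ∀ᵐ s ∂ν, ∀ᵐ y ∂μ, ‖Φ n y s‖ ≤ p s)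
    (hp : IntegrableOn p (Ioi 0))
    (hlim : ∀ᵐ s ∂ν, ∀ᵐ y ∂μ,
      Tendsto (fun n => Φ n y s) atTop (𝓝 (φ y s))) :
    Tendsto (fun n => volterraOp μ K (Φ n) x t) atTop (𝓝 (volterraOp μ K φ x t)) := by
  refine tendsto_integral_of_dominated_convergence p
    (fun n => (integrableOn_volterraIntegrand hK hK0 hx (hΦ n) (hΦp n) hp).aestronglyMeasurable)
    (hp.mono_set Ioc_subset_Ioi_self)
    (fun n => ae_norm_volterraIntegrand_le hK0 hx (hΦp n)) ?_
  filter_upwards [ae_restrict_Ioc_sub t hx,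
    ae_restrict_of_ae_restrict_of_subset Ioc_subset_Ioi_self (ae_all_iff.2 hΦp),
    ae_restrict_of_ae_restrict_of_subset Ioc_subset_Ioi_self hlim] with s hKs hΦs hs
  refine tendsto_integral_of_dominated_convergence (fun y => K x y (t - s) * p s)
    (fun n => ((hK.comp (f := fun y => (x, y, t - s)) (by fun_prop)).mul
      ((hΦ n).comp (f := fun y => (y, s)) (by fun_prop))).aestronglyMeasurable)
    ((Integrable.of_integral_ne_zero (hKs ▸ one_ne_zero)).mul_const _) (fun n => ?_)
    (hs.mono fun y hy => hy.const_mul _)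
  filter_upwards [hΦs n] with y hy
  rw [norm_mul, Real.norm_of_nonneg (hK0 y _)]
  exact mul_le_mul_of_nonneg_left hy (hK0 y _)

end Volterra

theorem exists_measurable_tendsto_of_ae_antitone {α : Type*} [MeasurableSpace α]
    {π : Measure α} {f : ℕ → α → ℝ} {c : ℝ} (hf : ∀ n, Measurable (f n))
    (hc : ∀ n a, c ≤ f n a) (hanti : ∀ᵐ a ∂π, Antitone fun n => f n a) :
    ∃ u : α → ℝ, Measurable u ∧ (∀ a, c ≤ u a) ∧
      ∀ᵐ a ∂π, Tendsto (fun n => f n a) atTop (𝓝 (u a)) :=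
  ⟨fun a => ⨅ n, f n a, Measurable.iInf hf, fun a => le_ciInf fun n => hc n a,
    hanti.mono fun a ha => tendsto_atTop_ciInf ha ⟨c, forall_mem_range.2 fun n => hc n a⟩⟩

theorem norm_mul_le_mul_of_monotoneOn {G : ℝ → ℝ} (hGm : MonotoneOn G (Ici 0))
    (hG0 : ∀ r, 0 ≤ r → 0 ≤ G r) {a b r ξ : ℝ} (ha : 0 ≤ a) (hab : a ≤ b) (hr : 0 ≤ r)
    (hrξ : r ≤ ξ) : ‖a * G r‖ ≤ b * G ξ := by
  rw [Real.norm_of_nonneg (mul_nonneg ha (hG0 r hr))]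
  exact mul_le_mul hab (hGm hr (hr.trans hrξ) hrξ) (hG0 r hr) (ha.trans hab)

section Hammerstein

variable {X : Type*} [MeasurableSpace X] {μ : Measure X} {K : X → X → ℝ → ℝ}
  {g h : X → ℝ → ℝ} {G p : ℝ → ℝ} {β ξ : ℝ} {v w : X → ℝ → ℝ}

local notation "ν" => volume.restrict (Ioi (0 : ℝ))

local notation "π" => μ.prod ν

structure IsStochasticKernel (μ : Measure X) (K : X → X → ℝ → ℝ) : Prop where
  measurable : Measurable fun q : X × X × ℝ => K q.1 q.2.1 q.2.2
  nonneg : ∀ x y t, 0 ≤ K x y t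
  integral_eq_one : ∀ᵐ x ∂μ, ∀ᵐ t ∂ν, ∫ y, K x y t ∂μ = 1

noncomputable def hammersteinOp (μ : Measure X) (K : X → X → ℝ → ℝ) (g h : X → ℝ → ℝ)
    (G : ℝ → ℝ) (w : X → ℝ → ℝ) (x : X) (t : ℝ) : ℝ :=
  g x t + volterraOp μ K (fun y s => h y s * G (w y s)) x t

theorem hammersteinOp_nonneg (hK0 : ∀ x y t, 0 ≤ K x y t) (hg0 : ∀ x t, 0 ≤ g x t)
    (hh0 : ∀ y s, 0 ≤ h y s) (hG0 : ∀ r, 0 ≤ r → 0 ≤ G r) (hw0 : ∀ y s, 0 ≤ w y s)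
    (x : X) (t : ℝ) : 0 ≤ hammersteinOp μ K g h G w x t :=
  add_nonneg (hg0 x t) <|
    volterraOp_nonneg (hK0 x) fun y s => mul_nonneg (hh0 y s) (hG0 _ (hw0 y s))

variable [SigmaFinite μ]

theorem measurable_hammersteinIntegrand (hh : Measurable fun q : X × ℝ => h q.1 q.2)
    (hG : ContinuousOn G (Ici 0)) (hw : Measurable fun q : X × ℝ => w q.1 q.2)
    (hw0 : ∀ y s, 0 ≤ w y s) : Measurable fun q : X × ℝ => h q.1 q.2 * G (w q.1 q.2) :=
  hh.mul (hG.measurable_comp_of_nonneg hw fun q => hw0 q.1 q.2)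

theorem measurable_hammersteinOp (hK : Measurable fun q : X × X × ℝ => K q.1 q.2.1 q.2.2)
    (hg : Measurable fun q : X × ℝ => g q.1 q.2) (hh : Measurable fun q : X × ℝ => h q.1 q.2)
    (hG : ContinuousOn G (Ici 0)) (hw : Measurable fun q : X × ℝ => w q.1 q.2)
    (hw0 : ∀ y s, 0 ≤ w y s) :
    Measurable fun q : X × ℝ => hammersteinOp μ K g h G w q.1 q.2 :=
  hg.add (measurable_volterraOp hK (measurable_hammersteinIntegrand hh hG hw hw0))

theorem ae_norm_hammersteinIntegrand_le (hh0 : ∀ y s, 0 ≤ h y s)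
    (hhp : ∀ᵐ q ∂π, h q.1 q.2 ≤ p q.2)
    (hGm : MonotoneOn G (Ici 0)) (hG0 : ∀ r, 0 ≤ r → 0 ≤ G r) (hw0 : ∀ y s, 0 ≤ w y s)
    (hwξ : ∀ᵐ q ∂π, w q.1 q.2 ≤ ξ) :
    ∀ᵐ s ∂ν, ∀ᵐ y ∂μ, ‖h y s * G (w y s)‖ ≤ p s * G ξ :=
  Measure.ae_ae_swap_of_ae_prod <| by
    filter_upwards [hhp, hwξ] with q hq hqξ
    exact norm_mul_le_mul_of_monotoneOn hGm hG0 (hh0 _ _) hq (hw0 _ _) hqξ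

theorem ae_hammersteinOp_le (hK : IsStochasticKernel μ K) (hh0 : ∀ y s, 0 ≤ h y s)
    (hhp : ∀ᵐ q ∂π, h q.1 q.2 ≤ p q.2)
    (hp : IntegrableOn p (Ioi 0)) (hp1 : ∀ t, ∫ s in Ioc 0 t, p s ≤ 1)
    (hGm : MonotoneOn G (Ici 0)) (hG0 : ∀ r, 0 ≤ r → 0 ≤ G r) (hξ : 0 ≤ ξ)
    (hw0 : ∀ y s, 0 ≤ w y s) (hwξ : ∀ᵐ q ∂π, w q.1 q.2 ≤ ξ) :
    ∀ᵐ q ∂π,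
      hammersteinOp μ K g h G w q.1 q.2 ≤ g q.1 q.2 + G ξ := by
  filter_upwards [Measure.quasiMeasurePreserving_fst.ae hK.integral_eq_one] with q hq
  refine add_le_add_right ?_ _
  calc volterraOp μ K (fun y s => h y s * G (w y s)) q.1 q.2
      ≤ ∫ s in Ioc 0 q.2, p s * G ξ := volterraOp_le (hK.nonneg q.1) hq
        (ae_norm_hammersteinIntegrand_le hh0 hhp hGm hG0 hw0 hwξ) (hp.mul_const _)
    _ ≤ G ξ := by
      rw [integral_mul_const]
      exact mul_le_of_le_one_left (hG0 ξ hξ) (hp1 q.2)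

theorem ae_hammersteinOp_mono (hK : IsStochasticKernel μ K)
    (hh : Measurable fun q : X × ℝ => h q.1 q.2) (hh0 : ∀ y s, 0 ≤ h y s)
    (hhp : ∀ᵐ q ∂π, h q.1 q.2 ≤ p q.2)
    (hp : IntegrableOn p (Ioi 0)) (hG : ContinuousOn G (Ici 0)) (hGm : MonotoneOn G (Ici 0))
    (hG0 : ∀ r, 0 ≤ r → 0 ≤ G r)
    (hv : Measurable fun q : X × ℝ => v q.1 q.2) (hv0 : ∀ y s, 0 ≤ v y s)
    (hw : Measurable fun q : X × ℝ => w q.1 q.2) (hw0 : ∀ y s, 0 ≤ w y s)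
    (hwξ : ∀ᵐ q ∂π, w q.1 q.2 ≤ ξ)
    (hvw : ∀ᵐ q ∂π, v q.1 q.2 ≤ w q.1 q.2) :
    ∀ᵐ q ∂π,
      hammersteinOp μ K g h G v q.1 q.2 ≤ hammersteinOp μ K g h G w q.1 q.2 := by
  have hvξ : ∀ᵐ q ∂π, v q.1 q.2 ≤ ξ := by
    filter_upwards [hvw, hwξ] with q h1 h2 using h1.trans h2
  have hGvw : ∀ᵐ s ∂ν, ∀ᵐ y ∂μ,
      h y s * G (v y s) ≤ h y s * G (w y s) := Measure.ae_ae_swap_of_ae_prod <| by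
    filter_upwards [hvw] with q hq
    exact mul_le_mul_of_nonneg_left (hGm (hv0 _ _) (hw0 _ _) hq) (hh0 _ _)
  filter_upwards [Measure.quasiMeasurePreserving_fst.ae hK.integral_eq_one] with q hq
  exact add_le_add_right (volterraOp_mono hK.measurable (hK.nonneg q.1) hq
    (measurable_hammersteinIntegrand hh hG hw hw0) (measurable_hammersteinIntegrand hh hG hv hv0)
    (ae_norm_hammersteinIntegrand_le hh0 hhp hGm hG0 hw0 hwξ)
    (ae_norm_hammersteinIntegrand_le hh0 hhp hGm hG0 hv0 hvξ) (hp.mul_const _) hGvw) _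

theorem iterates_hammersteinOp_bounded_antitone (hK : IsStochasticKernel μ K)
    (hg : Measurable fun q : X × ℝ => g q.1 q.2) (hg0 : ∀ x t, 0 ≤ g x t)
    (hgβ : ∀ᵐ q ∂π, g q.1 q.2 ≤ β) (hh : Measurable fun q : X × ℝ => h q.1 q.2)
    (hh0 : ∀ y s, 0 ≤ h y s) (hhp : ∀ᵐ q ∂π, h q.1 q.2 ≤ p q.2)
    (hp : IntegrableOn p (Ioi 0)) (hp1 : ∀ t, ∫ s in Ioc 0 t, p s ≤ 1)
    (hG : ContinuousOn G (Ici 0)) (hGm : MonotoneOn G (Ici 0)) (hG0 : ∀ r, 0 ≤ r → 0 ≤ G r)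
    (hξ : 0 ≤ ξ) (hξβ : ξ - G ξ = β) {U : ℕ → X → ℝ → ℝ}
    (hU0 : ∀ x t, U 0 x t = ξ - β + g x t)
    (hU : ∀ m, U (m + 1) = hammersteinOp μ K g h G (U m)) :
    (∀ m, Measurable fun q : X × ℝ => U m q.1 q.2) ∧ (∀ m x t, 0 ≤ U m x t) ∧
      ∀ m, (∀ᵐ q ∂π, U m q.1 q.2 ≤ ξ) ∧
        ∀ᵐ q ∂π, U (m + 1) q.1 q.2 ≤ U m q.1 q.2 := by
  have hU_nonneg : ∀ m x t, 0 ≤ U m x t := by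
    intro m
    induction m with
    | zero => intro x t; rw [hU0]; linarith [hg0 x t, hG0 ξ hξ]
    | succ m ih => rw [hU m]; exact hammersteinOp_nonneg hK.nonneg hg0 hh0 hG0 ih
  have hU_meas : ∀ m, Measurable fun q : X × ℝ => U m q.1 q.2 := by
    intro m
    induction m with
    | zero => simp only [hU0]; exact measurable_const.add hg
    | succ m ih =>
      rw [hU m]
      exact measurable_hammersteinOp hK.measurable hg hh hG ih (hU_nonneg m)
  have hU_succ_le : ∀ m, (∀ᵐ q ∂π, U m q.1 q.2 ≤ ξ) →
      ∀ᵐ q ∂π, U (m + 1) q.1 q.2 ≤ g q.1 q.2 + G ξ :=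
    fun m hm => hU m ▸ ae_hammersteinOp_le hK hh0 hhp hp hp1 hGm hG0 hξ (hU_nonneg m) hm
  refine ⟨hU_meas, hU_nonneg, fun m => ?_⟩
  induction m with
  | zero =>
    have h0 : ∀ᵐ q ∂π, U 0 q.1 q.2 ≤ ξ := by
      filter_upwards [hgβ] with q hq
      rw [hU0]; linarith
    refine ⟨h0, ?_⟩
    filter_upwards [hU_succ_le 0 h0] with q hq
    rw [hU0]; linarith
  | succ m ih =>
    refine ⟨?_, ?_⟩
    · filter_upwards [hU_succ_le m ih.1, hgβ] with q h1 h2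
      linarith
    · simpa only [← hU] using ae_hammersteinOp_mono (g := g) hK hh hh0 hhp hp hG hGm hG0
        (hU_meas (m + 1)) (hU_nonneg (m + 1)) (hU_meas m) (hU_nonneg m) ih.1 ih.2

theorem ae_eq_hammersteinOp_of_tendsto (hK : IsStochasticKernel μ K)
    (hh : Measurable fun q : X × ℝ => h q.1 q.2) (hh0 : ∀ y s, 0 ≤ h y s)
    (hhp : ∀ᵐ q ∂π, h q.1 q.2 ≤ p q.2)
    (hp : IntegrableOn p (Ioi 0)) (hG : ContinuousOn G (Ici 0)) (hGm : MonotoneOn G (Ici 0))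
    (hG0 : ∀ r, 0 ≤ r → 0 ≤ G r) {U : ℕ → X → ℝ → ℝ}
    (hU : ∀ m, U (m + 1) = hammersteinOp μ K g h G (U m))
    (hU_meas : ∀ m, Measurable fun q : X × ℝ => U m q.1 q.2) (hU_nonneg : ∀ m y s, 0 ≤ U m y s)
    (hUξ : ∀ m, ∀ᵐ q ∂π, U m q.1 q.2 ≤ ξ) (hw0 : ∀ y s, 0 ≤ w y s)
    (hlim : ∀ᵐ q ∂π, Tendsto (fun m => U m q.1 q.2) atTop (𝓝 (w q.1 q.2))) :
    ∀ᵐ q ∂π, w q.1 q.2 = hammersteinOp μ K g h G w q.1 q.2 := by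
  have hGlim : ∀ᵐ s ∂ν, ∀ᵐ y ∂μ,
      Tendsto (fun m => h y s * G (U m y s)) atTop (𝓝 (h y s * G (w y s))) :=
    Measure.ae_ae_swap_of_ae_prod <| by
      filter_upwards [hlim] with q hq
      exact ((hG _ (hw0 _ _)).tendsto.comp (tendsto_nhdsWithin_iff.2
        ⟨hq, Eventually.of_forall fun m => hU_nonneg m _ _⟩)).const_mul _
  filter_upwards [hlim, Measure.quasiMeasurePreserving_fst.ae hK.integral_eq_one] with q hq hKq
  have hTlim := (tendsto_volterraOp (t := q.2) hK.measurable (hK.nonneg q.1) hKq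
    (fun m => measurable_hammersteinIntegrand hh hG (hU_meas m) (hU_nonneg m))
    (fun m => ae_norm_hammersteinIntegrand_le hh0 hhp hGm hG0 (hU_nonneg m) (hUξ m))
    (hp.mul_const _) hGlim).const_add (g q.1 q.2)
  refine tendsto_nhds_unique ((tendsto_add_atTop_iff_nat 1).2 hq) ?_
  simp only [hU]
  exact hTlim

end Hammerstein

theorem existence_stochastic_general
    {X : Type*} [MeasurableSpace X] (μ : Measure X) [SigmaFinite μ]
    (K : X → X → ℝ → ℝ) (g h : X → ℝ → ℝ) (G : ℝ → ℝ)
    (p₁ p₂ : ℝ → ℝ) (β ξ : ℝ)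
    (hK_meas : Measurable fun q : X × X × ℝ => K q.1 q.2.1 q.2.2)
    (hK_nonneg : ∀ x y t, 0 ≤ K x y t)
    (hK_stoch : ∀ᵐ x ∂μ, ∀ᵐ t ∂(volume.restrict (Ioi (0:ℝ))),
      (∫ y, K x y t ∂μ) = 1)
    (hg_meas : Measurable fun q : X × ℝ => g q.1 q.2)
    (hg_nonneg : ∀ x t, 0 ≤ g x t)
    (hg_bdd : MemLp (fun q : X × ℝ => g q.1 q.2) ⊤
      (μ.prod (volume.restrict (Ioi (0:ℝ)))))
    (hβ : β = (eLpNorm (fun q : X × ℝ => g q.1 q.2) ⊤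
      (μ.prod (volume.restrict (Ioi (0:ℝ))))).toReal)
    (hh_meas : Measurable fun q : X × ℝ => h q.1 q.2)
    (hh_nonneg : ∀ x t, 0 ≤ h x t)
    (hG_cont : ContinuousOn G (Ici 0))
    (hG_nonneg : ∀ u, 0 ≤ u → 0 ≤ G u)
    (hG_mono : StrictMonoOn G (Ici 0))
    (hp₂_pos : ∀ t ∈ Ioi (0:ℝ), 0 < p₂ t)
    (hp₂_int : (∫ t in Ioi (0:ℝ), p₂ t) = 1)
    (hp_bound : ∀ᵐ x ∂μ, ∀ᵐ t ∂(volume.restrict (Ioi (0:ℝ))),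
      p₁ t ≤ h x t ∧ h x t ≤ p₂ t)
    (hξ_pos : 0 < ξ) (hξ_eq : ξ - G ξ = β)
    (U : ℕ → X → ℝ → ℝ)
    (hU0 : ∀ x t, U 0 x t = ξ - β + g x t)
    (hUsucc : ∀ m x t, U (m + 1) x t =
      g x t + ∫ s in Ioc (0:ℝ) t, ∫ y, K x y (t - s) * (h y s * G (U m y s)) ∂μ) :
    ∃ u : X → ℝ → ℝ,
      MemLp (fun q : X × ℝ => u q.1 q.2) ⊤ (μ.prod (volume.restrict (Ioi (0:ℝ)))) ∧
      (∀ᵐ q ∂(μ.prod (volume.restrict (Ioi (0:ℝ)))), 0 ≤ u q.1 q.2) ∧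
      (∀ᵐ q ∂(μ.prod (volume.restrict (Ioi (0:ℝ)))),
        u q.1 q.2 = g q.1 q.2 +
          ∫ s in Ioc (0:ℝ) q.2, ∫ y, K q.1 y (q.2 - s) * (h y s * G (u y s)) ∂μ) ∧
      (∀ m, Measurable fun q : X × ℝ => U m q.1 q.2) ∧
      (∀ᵐ q ∂(μ.prod (volume.restrict (Ioi (0:ℝ)))),
        ∀ m, 0 ≤ U m q.1 q.2 ∧ U (m + 1) q.1 q.2 ≤ U m q.1 q.2) ∧
      (∀ᵐ q ∂(μ.prod (volume.restrict (Ioi (0:ℝ)))),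
        Tendsto (fun m => U m q.1 q.2) atTop (nhds (u q.1 q.2))) := by
  have hp₂ : IntegrableOn p₂ (Ioi 0) := Integrable.of_integral_ne_zero (hp₂_int ▸ one_ne_zero)
  have hp₂_le : ∀ t, ∫ s in Ioc 0 t, p₂ s ≤ 1 := fun t => hp₂_int ▸ setIntegral_mono_set hp₂
    ((ae_restrict_mem measurableSet_Ioi).mono fun s hs => (hp₂_pos s hs).le)
    Ioc_subset_Ioi_self.eventuallyLE
  have hhp : ∀ᵐ q ∂μ.prod (volume.restrict (Ioi 0)), h q.1 q.2 ≤ p₂ q.2 :=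
    Measure.ae_prod_le_of_ae_ae hh_meas hp₂.aemeasurable
      (hp_bound.mono fun _ hx => hx.mono fun _ ht => ht.2)
  have hgβ : ∀ᵐ q ∂μ.prod (volume.restrict (Ioi 0)), g q.1 q.2 ≤ β :=
    hβ ▸ hg_bdd.ae_norm_le_toReal_eLpNorm_top.mono fun _ hq => (Real.le_norm_self _).trans hq
  have hK : IsStochasticKernel μ K := ⟨hK_meas, hK_nonneg, hK_stoch⟩
  have hU : ∀ m, U (m + 1) = hammersteinOp μ K g h G (U m) := fun m => funext₂ (hUsucc m)
  obtain ⟨hU_meas, hU_nonneg, hU_le_anti⟩ :=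
    iterates_hammersteinOp_bounded_antitone hK hg_meas hg_nonneg hgβ
    hh_meas hh_nonneg hhp hp₂ hp₂_le hG_cont hG_mono.monotoneOn hG_nonneg hξ_pos.le hξ_eq hU0 hU
  have hU_ae : ∀ᵐ q ∂μ.prod (volume.restrict (Ioi 0)),
      ∀ m, U m q.1 q.2 ≤ ξ ∧ U (m + 1) q.1 q.2 ≤ U m q.1 q.2 :=
    ae_all_iff.2 fun m => (hU_le_anti m).1.and (hU_le_anti m).2
  obtain ⟨u, hu, hu0, hlim⟩ := exists_measurable_tendsto_of_ae_antitone hU_meas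
    (fun m q => hU_nonneg m q.1 q.2) (hU_ae.mono fun q hq => antitone_nat_of_succ_le (hq · |>.2))
  refine ⟨fun x t => u (x, t), ?_, ae_of_all _ fun q => hu0 q, ?_, hU_meas, ?_, hlim⟩
  · refine memLp_top_of_bound hu.aestronglyMeasurable ξ ?_
    filter_upwards [hlim, hU_ae] with q hq hqξ
    rw [Real.norm_of_nonneg (hu0 q)]
    exact le_of_tendsto' hq (hqξ · |>.1)
  · exact ae_eq_hammersteinOp_of_tendsto hK hh_meas hh_nonneg hhp hp₂ hG_cont hG_mono.monotoneOn
      hG_nonneg hU hU_meas hU_nonneg (fun m => (hU_le_anti m).1) (fun y s => hu0 (y, s)) hlim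
  · filter_upwards [hU_ae] with q hq m
    exact ⟨hU_nonneg m q.1 q.2, (hq m).2⟩

/-- **Existence, stochastic case (Theorem 3.1, first part).**
Under the stated assumptions (stochastic kernel, bounded non-negative `g`,
`h` sandwiched between `p₁` and `p₂`, concave non-linearity `G`, and the
threshold `ξ` with `ξ - G ξ = β`), there exists a non-negative `u ∈ L^∞`
solving the Hammerstein–Volterra integral equation, and `u` is the a.e.
pointwise limit of the nonincreasing iteration `U`. -/
theorem existence_stochastic
    {X : Type*} [MeasurableSpace X] (μ : Measure X) [SigmaFinite μ]
    (K : X → X → ℝ → ℝ) (g h : X → ℝ → ℝ) (G : ℝ → ℝ)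
    (p₁ p₂ : ℝ → ℝ) (β ξ : ℝ)
    (hK_meas : Measurable fun q : X × X × ℝ => K q.1 q.2.1 q.2.2)
    (hK_nonneg : ∀ x y t, 0 ≤ K x y t)
    (hK_stoch : ∀ᵐ x ∂μ, ∀ᵐ t ∂(volume.restrict (Ioi (0:ℝ))),
      (∫ y, K x y t ∂μ) = 1)
    (hg_meas : Measurable fun q : X × ℝ => g q.1 q.2)
    (hg_nonneg : ∀ x t, 0 ≤ g x t)
    (hg_bdd : MemLp (fun q : X × ℝ => g q.1 q.2) ⊤
      (μ.prod (volume.restrict (Ioi (0:ℝ)))))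
    (hβ : β = (eLpNorm (fun q : X × ℝ => g q.1 q.2) ⊤
      (μ.prod (volume.restrict (Ioi (0:ℝ))))).toReal)
    (hh_meas : Measurable fun q : X × ℝ => h q.1 q.2)
    (hh_nonneg : ∀ x t, 0 ≤ h x t)
    (hG_cont : ContinuousOn G (Ici 0))
    (hG_zero : G 0 = 0)
    (hG_nonneg : ∀ u, 0 ≤ u → 0 ≤ G u)
    (hG_mono : StrictMonoOn G (Ici 0))
    (hG_conc : ConcaveOn ℝ (Ici 0) G)
    (hp₁_cont : ContinuousOn p₁ (Ioi 0)) (hp₂_cont : ContinuousOn p₂ (Ioi 0))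
    (hp₁_pos : ∀ t ∈ Ioi (0:ℝ), 0 < p₁ t) (hp₂_pos : ∀ t ∈ Ioi (0:ℝ), 0 < p₂ t)
    (hp_ne : ∃ t ∈ Ioi (0:ℝ), p₁ t ≠ p₂ t)
    (hp₂_int : (∫ t in Ioi (0:ℝ), p₂ t) = 1)
    (hp_bound : ∀ᵐ x ∂μ, ∀ᵐ t ∂(volume.restrict (Ioi (0:ℝ))),
      p₁ t ≤ h x t ∧ h x t ≤ p₂ t)
    (hξ_pos : 0 < ξ) (hξ_eq : ξ - G ξ = β)
    (U : ℕ → X → ℝ → ℝ)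
    (hU0 : ∀ x t, U 0 x t = ξ - β + g x t)
    (hUsucc : ∀ m x t, U (m + 1) x t =
      g x t + ∫ s in Ioc (0:ℝ) t, ∫ y, K x y (t - s) * (h y s * G (U m y s)) ∂μ) :
    ∃ u : X → ℝ → ℝ,
      MemLp (fun q : X × ℝ => u q.1 q.2) ⊤ (μ.prod (volume.restrict (Ioi (0:ℝ)))) ∧
      (∀ᵐ q ∂(μ.prod (volume.restrict (Ioi (0:ℝ)))), 0 ≤ u q.1 q.2) ∧
      (∀ᵐ q ∂(μ.prod (volume.restrict (Ioi (0:ℝ)))),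
        u q.1 q.2 = g q.1 q.2 +
          ∫ s in Ioc (0:ℝ) q.2, ∫ y, K q.1 y (q.2 - s) * (h y s * G (u y s)) ∂μ) ∧
      (∀ m, Measurable fun q : X × ℝ => U m q.1 q.2) ∧
      (∀ᵐ q ∂(μ.prod (volume.restrict (Ioi (0:ℝ)))),
        ∀ m, 0 ≤ U m q.1 q.2 ∧ U (m + 1) q.1 q.2 ≤ U m q.1 q.2) ∧
      (∀ᵐ q ∂(μ.prod (volume.restrict (Ioi (0:ℝ)))),
        Tendsto (fun m => U m q.1 q.2) atTop (nhds (u q.1 q.2))) :=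
  existence_stochastic_general μ K g h G p₁ p₂ β ξ hK_meas hK_nonneg hK_stoch hg_meas hg_nonneg
    hg_bdd hβ hh_meas hh_nonneg hG_cont hG_nonneg hG_mono hp₂_pos hp₂_int hp_bound hξ_pos hξ_eq U
    hU0 hUsucc
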